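/- arXiv:2212.14173 — 9 statements merged into one kernel-verified Lean document; each statement's English description precedes it below -/
import Mathlib

section
/- Let r : V × C → ℝ≥0 be a misrepresentation function on a finite candidate set C linearly ordered by ≺, and suppose the profile is single-peaked with respect to ≺ (i.e., for every voter v and candidates a ≺ b ≺ c, r(v,a) < r(v,b) implies r(v,b) ≤ r(v,c)). Then for any voter v, any candidates ci ≺ cj, and any finite set C' of candidates all strictly ≺ ci, we have min(r(v,ci), r(v,cj)) − r(v,ci) = min over C' ∪ {ci, cj} of r(v,·) − min over C' ∪ {ci} of r(v,·). -/
/-- key consequence of single-peakedness (Claim 1 in the paper).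
For any voter `v`, candidates `ci ≺ cj`, and any finite set `C'` of candidates all
strictly before `ci`, we have
`min (r v ci) (r v cj) - r v ci = r(v, C' ∪ {ci, cj}) - r(v, C' ∪ {ci})`. -/
theorem stmt0 {V C : Type*} [LinearOrder C]
    (r : V → C → ℝ) (hnn : ∀ v c, 0 ≤ r v c)
    (hsp : ∀ (v : V) (a b c : C), a < b → b < c → r v a < r v b → r v b ≤ r v c)
    (hsp' : ∀ (v : V) (a b c : C), a < b → b < c → r v c < r v b → r v b ≤ r v a)
    (v : V) (ci cj : C) (hij : ci < cj)
    (C' : Finset C) (hC' : ∀ c ∈ C', c < ci) :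
    min (r v ci) (r v cj) - r v ci
      = (insert ci (insert cj C')).inf' (Finset.insert_nonempty _ _) (r v)
        - (insert ci C').inf' (Finset.insert_nonempty _ _) (r v) := by
  have hBle : (insert ci C').inf' (Finset.insert_nonempty _ _) (r v) ≤ r v ci :=
    Finset.inf'_le _ (Finset.mem_insert_self _ _)
  rcases le_or_gt (r v ci) (r v cj) with h | h
  · have hA : (insert ci (insert cj C')).inf' (Finset.insert_nonempty _ _) (r v)
        = (insert ci C').inf' (Finset.insert_nonempty _ _) (r v) := by
      apply le_antisymm
      · apply Finset.le_inf'
        intro c hc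
        rcases Finset.mem_insert.mp hc with rfl | hc
        · exact Finset.inf'_le _ (Finset.mem_insert_self _ _)
        · exact Finset.inf'_le _ (Finset.mem_insert_of_mem (Finset.mem_insert_of_mem hc))
      · apply Finset.le_inf'
        intro c hc
        rcases Finset.mem_insert.mp hc with rfl | hc
        · exact hBle
        · rcases Finset.mem_insert.mp hc with rfl | hc
          · exact hBle.trans h
          · exact Finset.inf'_le _ (Finset.mem_insert_of_mem hc)
    rw [hA, min_eq_left h, sub_self, sub_self]
  · have key : ∀ c ∈ C', r v ci ≤ r v c := fun c hc => hsp' v c ci cj (hC' c hc) hij h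
    have hB : (insert ci C').inf' (Finset.insert_nonempty _ _) (r v) = r v ci := by
      apply le_antisymm hBle
      apply Finset.le_inf'
      intro c hc
      rcases Finset.mem_insert.mp hc with rfl | hc
      · exact le_rfl
      · exact key c hc
    have hA : (insert ci (insert cj C')).inf' (Finset.insert_nonempty _ _) (r v) = r v cj := by
      apply le_antisymm (Finset.inf'_le _ (Finset.mem_insert_of_mem (Finset.mem_insert_self _ _)))
      apply Finset.le_inf'
      intro c hc
      rcases Finset.mem_insert.mp hc with rfl | hc
      · exact h.le
      · rcases Finset.mem_insert.mp hc with rfl | hc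
        · exact le_rfl
        · exact h.le.trans (key c hc)
    rw [hA, hB, min_eq_right h.le]
end

section
/- Let r : V × C → ℝ≥0 be single-peaked with respect to a linear order on candidates c_0 ≺ c_1 ≺ ⋯ ≺ c_{m+1}. Define edge weights w(i,j) = Σ_{v ∈ V} [min(r(v,c_i), r(v,c_j)) − r(v,c_i)] for i < j. Then w satisfies the concave Monge property: for all i, j with i + 1 < j, w(i,j) + w(i+1, j+1) ≤ w(i, j+1) + w(i+1, j). -/
lemma min_key (a b c d : ℝ) (h1 : a < b → b ≤ c) (h2 : d < c → c ≤ b) :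
    min a c + min b d ≤ min a d + min b c := by
  rcases lt_or_ge a b with h | h
  · have hbc := h1 h
    rcases lt_or_ge d c with h' | h'
    · have hcb := h2 h'
      simp only [min_def]; split_ifs <;> linarith
    · simp only [min_def]; split_ifs <;> linarith
  · rcases lt_or_ge d c with h' | h'
    · have hcb := h2 h'
      simp only [min_def]; split_ifs <;> linarith
    · simp only [min_def]; split_ifs <;> linarith

/-- the edge weights `w(i,j) = ∑_v (min(r v cᵢ, r v cⱼ) - r v cᵢ)` of the
Minimum Weight t-Link Path instance built from a single-peaked profile satisfy the
concave Monge property. -/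
theorem stmt1 {V : Type*} [Fintype V] (m : ℕ) (r : V → Fin (m + 2) → ℝ)
    (hnn : ∀ v c, 0 ≤ r v c)
    (hsp : ∀ (v : V) (a b c : Fin (m + 2)), a < b → b < c → r v a < r v b → r v b ≤ r v c)
    (hsp' : ∀ (v : V) (a b c : Fin (m + 2)), a < b → b < c → r v c < r v b → r v b ≤ r v a)
    (w : Fin (m + 2) → Fin (m + 2) → ℝ)
    (hw : ∀ a b, w a b = ∑ v : V, (min (r v a) (r v b) - r v a))
    (i j : ℕ) (hij : i + 1 < j) (hjm : j + 1 ≤ m + 1) :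
    w ⟨i, by omega⟩ ⟨j, by omega⟩ + w ⟨i + 1, by omega⟩ ⟨j + 1, by omega⟩
      ≤ w ⟨i, by omega⟩ ⟨j + 1, by omega⟩ + w ⟨i + 1, by omega⟩ ⟨j, by omega⟩ := by
  simp only [hw, ← Finset.sum_add_distrib]
  apply Finset.sum_le_sum
  intro v _
  set I : Fin (m + 2) := ⟨i, by omega⟩
  set I' : Fin (m + 2) := ⟨i + 1, by omega⟩
  set J : Fin (m + 2) := ⟨j, by omega⟩
  set J' : Fin (m + 2) := ⟨j + 1, by omega⟩
  have hII' : I < I' := by simp [I, I', Fin.mk_lt_mk]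
  have hI'J : I' < J := by simp [I', J, Fin.mk_lt_mk]; omega
  have hJJ' : J < J' := by simp [J, J', Fin.mk_lt_mk]
  have h1 : r v I < r v I' → r v I' ≤ r v J :=
    fun h => hsp v I I' J hII' hI'J h
  have h2 : r v J' < r v J → r v J ≤ r v I' :=
    fun h => hsp' v I' J J' hI'J hJJ' h
  have := min_key (r v I) (r v I') (r v J) (r v J') h1 h2
  linarith
end

section
/- Let r : V × C → ℝ≥0 be single-peaked with respect to c_0 ≺ c_1 ≺ ⋯ ≺ c_{m+1}, where r(v, c_0) = r(v, c_{m+1}) = U for all voters v and U is an upper bound on all misrepresentation values. For a strictly increasing sequence 0 = a_0 < a_1 < ⋯ < a_k < a_{k+1} = m+1, the telescoping sum Σ_{i=0}^{k} Σ_{v ∈ V} [r(v, {c_{a_i}, c_{a_{i+1}}}) − r(v, {c_{a_i}})] equals −U·|V| + Σ_{v ∈ V} min_{1 ≤ j ≤ k} r(v, c_{a_j}). -/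
/-- the telescoping identity for the weight of a `(k+1)`-edge path
`0 = a_0 < a_1 < ⋯ < a_k < a_{k+1} = m+1` in the reduction from CC-SP to
Minimum Weight t-Link Path. -/
theorem stmt3 {V : Type*} [Fintype V] (m k : ℕ) (hk : 0 < k)
    (r : V → Fin (m + 2) → ℝ) (hnn : ∀ v c, 0 ≤ r v c)
    (hsp : ∀ (v : V) (a b c : Fin (m + 2)), a < b → b < c → r v a < r v b → r v b ≤ r v c)
    (hsp' : ∀ (v : V) (a b c : Fin (m + 2)), a < b → b < c → r v c < r v b → r v b ≤ r v a)
    (U : ℝ) (hU : ∀ v c, r v c ≤ U)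
    (hb0 : ∀ v, r v 0 = U) (hblast : ∀ v, r v (Fin.last (m + 1)) = U)
    (a : Fin (k + 2) → Fin (m + 2)) (ha : StrictMono a)
    (ha0 : a 0 = 0) (halast : a (Fin.last (k + 1)) = Fin.last (m + 1)) :
    ∑ i : Fin (k + 1), ∑ v : V,
        (min (r v (a i.castSucc)) (r v (a i.succ)) - r v (a i.castSucc))
      = -U * (Fintype.card V)
        + ∑ v : V, (Finset.univ : Finset (Fin k)).inf' ⟨⟨0, hk⟩, Finset.mem_univ _⟩
            (fun t => r v (a ⟨(t : ℕ) + 1, Nat.succ_lt_succ (t.isLt.trans (Nat.lt_succ_self k))⟩)) := by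
  classical
  have key : ∀ v : V,
      (∑ i : Fin (k + 1),
          (min (r v (a i.castSucc)) (r v (a i.succ)) - r v (a i.castSucc)))
        = -U + (Finset.univ : Finset (Fin k)).inf' ⟨⟨0, hk⟩, Finset.mem_univ _⟩
            (fun t => r v (a ⟨(t : ℕ) + 1,
              Nat.succ_lt_succ (t.isLt.trans (Nat.lt_succ_self k))⟩)) := by
    intro v
    set x' : ℕ → ℝ := fun n => if h : n < k + 2 then r v (a ⟨n, h⟩) else U with hx'
    have hx'eq : ∀ (n : ℕ) (h : n < k + 2), x' n = r v (a ⟨n, h⟩) := by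
      intro n h; simp [hx', h]
    set Q : ℕ → ℝ := fun n => (Finset.range (n + 1)).inf'
      ⟨0, Finset.mem_range.mpr (Nat.succ_pos n)⟩ x' with hQ
    have Qle : ∀ n j, j ≤ n → Q n ≤ x' j := by
      intro n j h
      exact Finset.inf'_le _ (Finset.mem_range.mpr (Nat.lt_succ_of_le h))
    have step : ∀ n : ℕ, Q (n + 1) = min (x' (n + 1)) (Q n) := by
      intro n
      apply le_antisymm
      · refine le_min (Qle (n + 1) (n + 1) le_rfl) (Finset.le_inf' _ _ fun j hj => ?_)
        exact Qle (n + 1) j (by have := Finset.mem_range.mp hj; omega)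
      · apply Finset.le_inf'
        intro j hj
        have hj' : j < n + 2 := Finset.mem_range.mp hj
        rcases Nat.lt_or_ge j (n + 1) with hl | hg
        · exact (min_le_right _ _).trans (Qle n j (by omega))
        · have : j = n + 1 := by omega
          rw [this]
          exact min_le_left _ _
    have term : ∀ i : ℕ, i < k + 1 →
        min (x' i) (x' (i + 1)) - x' i = Q (i + 1) - Q i := by
      intro i hi
      rcases le_or_gt (x' i) (x' (i + 1)) with h | h
      · rw [min_eq_left h, step, min_eq_right ((Qle i i le_rfl).trans h)]
        ring
      · have hij : i < k + 2 := by omega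
        have hi1 : i + 1 < k + 2 := by omega
        have hxi : ∀ j < i, x' i ≤ x' j := by
          intro j hj
          by_contra hc
          push_neg at hc
          have hj2 : j < k + 2 := by omega
          rw [hx'eq j hj2, hx'eq i hij] at hc
          have h2 := hsp v (a ⟨j, hj2⟩) (a ⟨i, hij⟩) (a ⟨i + 1, hi1⟩)
            (ha (Fin.mk_lt_mk.mpr hj)) (ha (Fin.mk_lt_mk.mpr (Nat.lt_succ_self i))) hc
          rw [hx'eq i hij, hx'eq (i + 1) hi1] at h
          linarith
        have hQi : Q i = x' i := by
          apply le_antisymm (Qle i i le_rfl)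
          apply Finset.le_inf'
          intro j hjm
          have hjm' : j < i + 1 := Finset.mem_range.mp hjm
          rcases Nat.lt_or_ge j i with hj | hj
          · exact hxi j hj
          · have : j = i := by omega
            simp [this]
        rw [min_eq_right h.le, step, hQi, min_eq_left h.le]
    have tele : ∑ i ∈ Finset.range (k + 1), (min (x' i) (x' (i + 1)) - x' i)
        = Q (k + 1) - Q 0 := by
      rw [← Finset.sum_range_sub Q (k + 1)]
      exact Finset.sum_congr rfl fun i hi => term i (Finset.mem_range.mp hi)
    have Q0 : Q 0 = U := by
      have h02 : (0 : ℕ) < k + 2 := by omega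
      have : Q 0 = x' 0 := by
        simp [hQ]
      rw [this, hx'eq 0 h02]
      have : a ⟨0, h02⟩ = a 0 := rfl
      rw [this, ha0, hb0]
    have Qlast : Q (k + 1) = (Finset.univ : Finset (Fin k)).inf'
        ⟨⟨0, hk⟩, Finset.mem_univ _⟩
        (fun t => r v (a ⟨(t : ℕ) + 1,
          Nat.succ_lt_succ (t.isLt.trans (Nat.lt_succ_self k))⟩)) := by
      apply le_antisymm
      · apply Finset.le_inf'
        intro t _
        have ht : (t : ℕ) + 1 < k + 2 := by omega
        have := Qle (k + 1) ((t : ℕ) + 1) (by omega)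
        rwa [hx'eq _ ht] at this
      · apply Finset.le_inf'
        intro j hj
        have hj' : j < k + 2 := Finset.mem_range.mp hj
        rcases Nat.eq_zero_or_pos j with h0 | h0
        · subst h0
          rw [hx'eq 0 hj']
          have : a ⟨0, hj'⟩ = a 0 := rfl
          rw [this, ha0, hb0]
          calc (Finset.univ : Finset (Fin k)).inf' _ _
              ≤ r v (a ⟨(⟨0, hk⟩ : Fin k) + 1, _⟩) := Finset.inf'_le _ (Finset.mem_univ _)
            _ ≤ U := hU v _
        · rcases Nat.lt_or_ge j (k + 1) with hjk | hjk
          · have htk : j - 1 < k := by omega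
            have e : (⟨((⟨j - 1, htk⟩ : Fin k) : ℕ) + 1,
                Nat.succ_lt_succ ((⟨j - 1, htk⟩ : Fin k).isLt.trans
                  (Nat.lt_succ_self k))⟩ : Fin (k + 2)) = ⟨j, hj'⟩ := by
              apply Fin.ext
              simp
              omega
            rw [hx'eq j hj']
            refine le_trans (Finset.inf'_le _ (Finset.mem_univ (⟨j - 1, htk⟩ : Fin k)))
              (le_of_eq ?_)
            rw [e]
          · have hjeq : j = k + 1 := by omega
            subst hjeq
            rw [hx'eq (k + 1) hj']
            have : (⟨k + 1, hj'⟩ : Fin (k + 2)) = Fin.last (k + 1) := rfl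
            rw [this, halast, hblast]
            calc (Finset.univ : Finset (Fin k)).inf' _ _
                ≤ r v (a ⟨(⟨0, hk⟩ : Fin k) + 1, _⟩) := Finset.inf'_le _ (Finset.mem_univ _)
              _ ≤ U := hU v _
    have conv : ∀ i : Fin (k + 1),
        min (r v (a i.castSucc)) (r v (a i.succ)) - r v (a i.castSucc)
          = min (x' (i : ℕ)) (x' ((i : ℕ) + 1)) - x' (i : ℕ) := by
      intro i
      have h1 : ((i : ℕ) : ℕ) < k + 2 := by omega
      have h2 : (i : ℕ) + 1 < k + 2 := by omega
      rw [hx'eq _ h1, hx'eq _ h2]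
      have e1 : (⟨(i : ℕ), h1⟩ : Fin (k + 2)) = i.castSucc := rfl
      have e2 : (⟨(i : ℕ) + 1, h2⟩ : Fin (k + 2)) = i.succ := rfl
      rw [e1, e2]
    calc ∑ i : Fin (k + 1),
          (min (r v (a i.castSucc)) (r v (a i.succ)) - r v (a i.castSucc))
        = ∑ i : Fin (k + 1), (min (x' (i : ℕ)) (x' ((i : ℕ) + 1)) - x' (i : ℕ)) :=
          Finset.sum_congr rfl fun i _ => conv i
      _ = ∑ i ∈ Finset.range (k + 1), (min (x' i) (x' (i + 1)) - x' i) :=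
          Fin.sum_univ_eq_sum_range (fun n => min (x' n) (x' (n + 1)) - x' n) (k + 1)
      _ = Q (k + 1) - Q 0 := tele
      _ = -U + _ := by rw [Q0, Qlast]; ring
  rw [Finset.sum_comm]
  rw [Finset.sum_congr rfl fun v _ => key v]
  rw [Finset.sum_add_distrib, Finset.sum_const, Finset.card_univ, nsmul_eq_mul]
  ring
end

section
/- Under the setup of the reduction from CC-SP to Minimum Weight t-Link Path (edge weights w(i,j) = Σ_v [r(v,{c_i,c_j}) − r(v,{c_i})], source 0, target m+1, t = k+1), a size-k committee with total misrepresentation R exists if and only if there is a path from vertex 0 to vertex m+1 using exactly k+1 edges with total weight −U·n + R, where n = |V| and U is the common misrepresentation of the artificial boundary candidates. -/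
/-!
Along a path `0 = a₀ < ⋯ < a_{k+1} = m+1`, single-peakedness makes each voter's
misrepresentation nonincreasing and then nondecreasing, so the edge weights
`min (r a_i) (r a_{i+1}) - r a_i` telescope to the minimum over the path minus `r a₀ = U`.
The boundary candidates carry the maximal value `U`, so that minimum is the voter's
misrepresentation by the committee of interior vertices; and committees correspond to paths by
listing the committee together with the two boundary vertices in increasing order.
-/

open Finset

lemma Fin.inf'_univ_castSucc {α : Type*} [LinearOrder α] {n : ℕ} (g : Fin (n + 2) → α) :
    univ.inf' univ_nonempty g =
      min (univ.inf' univ_nonempty fun j : Fin (n + 1) => g j.castSucc)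
        (g (Fin.last (n + 1))) := by
  refine le_antisymm
    (le_min (le_inf' _ _ fun j _ => inf'_le _ (mem_univ _)) (inf'_le _ (mem_univ _)))
    (le_inf' _ _ fun j _ => ?_)
  induction j using Fin.lastCases with
  | last => exact min_le_right _ _
  | cast j => exact (min_le_left _ _).trans (inf'_le _ (mem_univ j))

lemma sum_min_sub_eq_inf'_sub {α : Type*} [AddCommGroup α] [LinearOrder α]
    [IsOrderedAddMonoid α] :
    ∀ {n : ℕ} (g : Fin (n + 1) → α), (∀ a b c, a < b → b < c → g c < g b → g b ≤ g a) →
      ∑ i : Fin n, (min (g i.castSucc) (g i.succ) - g i.castSucc) =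
        univ.inf' univ_nonempty g - g 0
  | 0, g, _ => by simp [Finset.univ_unique]
  | n + 1, g, hg => by
    rw [Fin.sum_univ_castSucc]
    simp only [Fin.succ_castSucc]
    rw [sum_min_sub_eq_inf'_sub (fun j => g j.castSucc)
      (fun a b c hab hbc => hg _ _ _ (Fin.castSucc_lt_castSucc_iff.2 hab)
        (Fin.castSucc_lt_castSucc_iff.2 hbc)),
      Fin.inf'_univ_castSucc]
    simp only [Fin.succ_last, Fin.castSucc_zero]
    rcases le_or_gt (g (Fin.last n).castSucc) (g (Fin.last (n + 1))) with hle | hlt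
    · have hmin : univ.inf' univ_nonempty (fun j : Fin (n + 1) => g j.castSucc) ≤
          g (Fin.last (n + 1)) := (inf'_le _ (mem_univ _)).trans hle
      rw [min_eq_left hle, min_eq_left hmin]
      abel
    · -- a strict descent at the last step puts every earlier value above it
      have hprev : univ.inf' univ_nonempty (fun j : Fin (n + 1) => g j.castSucc) =
          g (Fin.last n).castSucc := by
        refine le_antisymm (inf'_le _ (mem_univ _)) (le_inf' _ _ fun j _ => ?_)
        rcases (Fin.le_last j).lt_or_eq with hj | rfl
        · exact hg _ _ _ (Fin.castSucc_lt_castSucc_iff.2 hj) (Fin.castSucc_lt_last _) hlt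
        · exact le_rfl
      rw [hprev, min_eq_right hlt.le]
      abel

lemma sum_min_sub_comp_eq_inf'_image_sub {α β : Type*} [AddCommGroup α] [LinearOrder α]
    [IsOrderedAddMonoid α] [LinearOrder β] {f : β → α}
    (hf : ∀ a b c, a < b → b < c → f c < f b → f b ≤ f a) {n : ℕ} {a : Fin (n + 1) → β}
    (ha : StrictMono a) :
    ∑ i : Fin n, (min (f (a i.castSucc)) (f (a i.succ)) - f (a i.castSucc)) =
      (univ.image a).inf' (univ_nonempty.image a) f - f (a 0) := by
  rw [inf'_image]
  exact sum_min_sub_eq_inf'_sub (f ∘ a) fun x y z hxy hyz => hf _ _ _ (ha hxy) (ha hyz)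

lemma sum_min_sub_comp_eq_inf'_sub {α β : Type*} [AddCommGroup α] [LinearOrder α]
    [IsOrderedAddMonoid α] [LinearOrder β] {f : β → α}
    (hf : ∀ a b c, a < b → b < c → f c < f b → f b ≤ f a) {n : ℕ} {a : Fin (n + 1) → β}
    (ha : StrictMono a) {W : Finset β} (hW : W.Nonempty)
    (himage : univ.image a = insert (a 0) (insert (a (Fin.last n)) W))
    (h0 : ∀ c ∈ W, f c ≤ f (a 0)) (hlast : ∀ c ∈ W, f c ≤ f (a (Fin.last n))) :
    ∑ i : Fin n, (min (f (a i.castSucc)) (f (a i.succ)) - f (a i.castSucc)) =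
      W.inf' hW f - f (a 0) := by
  obtain ⟨c, hc⟩ := id hW
  have hinf_le (x : β) (hx : ∀ c ∈ W, f c ≤ f x) : W.inf' hW f ≤ f x :=
    (inf'_le f hc).trans (hx c hc)
  rw [sum_min_sub_comp_eq_inf'_image_sub hf ha]
  simp only [himage]
  rw [inf'_insert (insert_nonempty _ _), inf'_insert hW, min_eq_right (hinf_le _ hlast),
    min_eq_right (hinf_le _ h0)]

lemma Fin.exists_strictMono_image_eq_insert {m : ℕ} (W : Finset (Fin (m + 2)))
    (hW : ∀ c ∈ W, c ≠ 0 ∧ c ≠ Fin.last (m + 1)) :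
    ∃ a : Fin (W.card + 2) → Fin (m + 2), StrictMono a ∧ a 0 = 0 ∧
      a (Fin.last (W.card + 1)) = Fin.last (m + 1) ∧
      univ.image a = insert 0 (insert (Fin.last (m + 1)) W) := by
  set S := insert 0 (insert (Fin.last (m + 1)) W)
  have hS : S.card = W.card + 2 := by
    have h0 : (0 : Fin (m + 2)) ∉ insert (Fin.last (m + 1)) W := by
      simpa [eq_comm] using fun h => (hW 0 h).1 rfl
    rw [card_insert_of_notMem h0, card_insert_of_notMem fun h => (hW _ h).2 rfl]
  set a := S.orderEmbOfFin hS
  have hrange : Set.range a = S := range_orderEmbOfFin S hS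
  obtain ⟨i, hi⟩ : 0 ∈ Set.range a := by simp [hrange, S]
  obtain ⟨j, hj⟩ : Fin.last (m + 1) ∈ Set.range a := by simp [hrange, S]
  refine ⟨a, a.strictMono, ?_, ?_, image_orderEmbOfFin_univ S hS⟩
  · exact le_antisymm (hi ▸ a.monotone (Fin.zero_le i)) (Fin.zero_le _)
  · exact le_antisymm (Fin.le_last _) (hj ▸ a.monotone (Fin.le_last j))

lemma exists_card_eq_image_eq_insert {β : Type*} [DecidableEq β] {k : ℕ} {a : Fin (k + 2) → β}
    (ha : Function.Injective a) :
    ∃ W : Finset β, W.card = k ∧ (∀ c ∈ W, c ≠ a 0 ∧ c ≠ a (Fin.last (k + 1))) ∧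
      univ.image a = insert (a 0) (insert (a (Fin.last (k + 1))) W) := by
  have hlast_mem : a (Fin.last (k + 1)) ∈ (univ.image a).erase (a 0) :=
    mem_erase.2 ⟨ha.ne (Fin.last_pos).ne', mem_image_of_mem a (mem_univ _)⟩
  refine ⟨((univ.image a).erase (a 0)).erase (a (Fin.last (k + 1))), ?_, ?_, ?_⟩
  · rw [card_erase_of_mem hlast_mem, card_erase_of_mem (mem_image_of_mem a (mem_univ _)),
      card_image_of_injective _ ha, card_univ, Fintype.card_fin]
    rfl
  · intro c hc
    obtain ⟨hc_last, hc⟩ := mem_erase.1 hc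
    exact ⟨(mem_erase.1 hc).1, hc_last⟩
  · rw [insert_erase hlast_mem, insert_erase (mem_image_of_mem a (mem_univ _))]

lemma sum_sum_min_sub_eq_of_image_eq_insert {V : Type*} [Fintype V] {m k : ℕ}
    {r : V → Fin (m + 2) → ℝ}
    (hsp' : ∀ (v : V) (a b c : Fin (m + 2)), a < b → b < c → r v c < r v b → r v b ≤ r v a)
    {U : ℝ} (hU : ∀ v c, r v c ≤ U)
    (hb0 : ∀ v, r v 0 = U) (hblast : ∀ v, r v (Fin.last (m + 1)) = U)
    {a : Fin (k + 2) → Fin (m + 2)} (ha : StrictMono a) (ha0 : a 0 = 0)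
    (hlast : a (Fin.last (k + 1)) = Fin.last (m + 1))
    {W : Finset (Fin (m + 2))} (hW : W.Nonempty)
    (himage : univ.image a = insert 0 (insert (Fin.last (m + 1)) W)) :
    ∑ i : Fin (k + 1), ∑ v : V,
        (min (r v (a i.castSucc)) (r v (a i.succ)) - r v (a i.castSucc))
      = -U * (Fintype.card V) + ∑ v : V, W.inf' hW (r v) := by
  rw [← ha0, ← hlast] at himage
  calc _ = ∑ v : V, (W.inf' hW (r v) - U) := by
        rw [sum_comm]
        refine sum_congr rfl fun v _ => ?_
        rw [← hb0 v, ← ha0]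
        exact sum_min_sub_comp_eq_inf'_sub (hsp' v) ha hW himage
          (fun c _ => by rw [ha0, hb0]; exact hU v c)
          (fun c _ => by rw [hlast, hblast]; exact hU v c)
    _ = _ := by
        rw [sum_sub_distrib, sum_const, card_univ, nsmul_eq_mul]
        ring

theorem stmt4_general {V : Type*} [Fintype V] (m k : ℕ) (hk : 0 < k)
    (r : V → Fin (m + 2) → ℝ)
    (hsp' : ∀ (v : V) (a b c : Fin (m + 2)), a < b → b < c → r v c < r v b → r v b ≤ r v a)
    (U : ℝ) (hU : ∀ v c, r v c ≤ U)
    (hb0 : ∀ v, r v 0 = U) (hblast : ∀ v, r v (Fin.last (m + 1)) = U)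
    (R : ℝ) :
    (∃ (W : Finset (Fin (m + 2))) (hW : W.Nonempty),
        W.card = k ∧ (∀ c ∈ W, c ≠ 0 ∧ c ≠ Fin.last (m + 1)) ∧
        ∑ v : V, W.inf' hW (r v) = R)
    ↔ (∃ a : Fin (k + 2) → Fin (m + 2),
        StrictMono a ∧ a 0 = 0 ∧ a (Fin.last (k + 1)) = Fin.last (m + 1) ∧
        ∑ i : Fin (k + 1), ∑ v : V,
            (min (r v (a i.castSucc)) (r v (a i.succ)) - r v (a i.castSucc))
          = -U * (Fintype.card V) + R) := by
  constructor
  · rintro ⟨W, hW, rfl, hWint, rfl⟩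
    obtain ⟨a, ha, ha0, hlast, himage⟩ := Fin.exists_strictMono_image_eq_insert W hWint
    exact ⟨a, ha, ha0, hlast,
      sum_sum_min_sub_eq_of_image_eq_insert hsp' hU hb0 hblast ha ha0 hlast hW himage⟩
  · rintro ⟨a, ha, ha0, hlast, hsum⟩
    obtain ⟨W, hcard, hWint, himage⟩ := exists_card_eq_image_eq_insert ha.injective
    rw [ha0, hlast] at hWint himage
    have hW : W.Nonempty := card_pos.1 (hcard ▸ hk)
    refine ⟨W, hW, hcard, hWint, ?_⟩
    linarith [sum_sum_min_sub_eq_of_image_eq_insert hsp' hU hb0 hblast ha ha0 hlast hW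
      himage]

/-- correctness of the reduction from CC-SP to Minimum Weight t-Link Path.
A size-`k` committee (of non-artificial candidates) with total misrepresentation `R`
exists iff there is a path from vertex `0` to vertex `m+1` using exactly `k+1` edges
whose total weight is `-U * n + R`. -/
theorem stmt4 {V : Type*} [Fintype V] (m k : ℕ) (hk : 0 < k)
    (r : V → Fin (m + 2) → ℝ) (hnn : ∀ v c, 0 ≤ r v c)
    (hsp : ∀ (v : V) (a b c : Fin (m + 2)), a < b → b < c → r v a < r v b → r v b ≤ r v c)
    (hsp' : ∀ (v : V) (a b c : Fin (m + 2)), a < b → b < c → r v c < r v b → r v b ≤ r v a)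
    (U : ℝ) (hU : ∀ v c, r v c ≤ U)
    (hb0 : ∀ v, r v 0 = U) (hblast : ∀ v, r v (Fin.last (m + 1)) = U)
    (R : ℝ) :
    (∃ (W : Finset (Fin (m + 2))) (hW : W.Nonempty),
        W.card = k ∧ (∀ c ∈ W, c ≠ 0 ∧ c ≠ Fin.last (m + 1)) ∧
        ∑ v : V, W.inf' hW (r v) = R)
    ↔ (∃ a : Fin (k + 2) → Fin (m + 2),
        StrictMono a ∧ a 0 = 0 ∧ a (Fin.last (k + 1)) = Fin.last (m + 1) ∧
        ∑ i : Fin (k + 1), ∑ v : V,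
            (min (r v (a i.castSucc)) (r v (a i.succ)) - r v (a i.castSucc))
          = -U * (Fintype.card V) + R) :=
  stmt4_general m k hk r hsp' U hU hb0 hblast R
end

section
/- Let r : V × C → ℝ≥0 be single-peaked with respect to c_0 ≺ ⋯ ≺ c_{m+1}, fix a voter v and a minimizing index l_v, and for each j let p_{v,j} be the largest element of the downward-closed set S_j = { i < j : r(v,c_i) > r(v,c_j), or r(v,c_i) = r(v,c_j) and i ≤ l_v } (or −1 if S_j is empty). Then the sequence j ↦ p_{v,j} is unimodal: for all j_1 < j_2 < j_3, if p_{v,j_1} > p_{v,j_2} then p_{v,j_2} ≥ p_{v,j_3}. -/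
/-- unimodality of `j ↦ p_{v,j}`, where `p j` is the largest element
(or `-1` if none) of the downward-closed set
`S_j = { i < j : r v i > r v j, or r v i = r v j and i ≤ l }`. -/
theorem stmt6 {V : Type*} (m : ℕ) (r : V → Fin (m + 2) → ℝ)
    (hsp : ∀ (v : V) (a b c : Fin (m + 2)), a < b → b < c → r v a < r v b → r v b ≤ r v c)
    (hsp' : ∀ (v : V) (a b c : Fin (m + 2)), a < b → b < c → r v c < r v b → r v b ≤ r v a)
    (v : V) (l : Fin (m + 2)) (hl : ∀ i, r v l ≤ r v i)
    (p : Fin (m + 2) → ℤ)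
    (hpb : ∀ j, -1 ≤ p j ∧ p j < ((j : ℕ) : ℤ))
    (hp : ∀ j i : Fin (m + 2),
        (((i : ℕ) : ℤ) ≤ p j ↔ (i < j ∧ (r v j < r v i ∨ (r v i = r v j ∧ i ≤ l))))) :
    ∀ j₁ j₂ j₃ : Fin (m + 2), j₁ < j₂ → j₂ < j₃ → p j₂ < p j₁ → p j₃ ≤ p j₂ := by
  intro j₁ j₂ j₃ h12 h23 hlt
  by_contra h
  push_neg at h
  -- k := p j₁ as a Fin
  have hk0 : 0 ≤ p j₁ := by have := (hpb j₂).1; omega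
  have hkub : p j₁ < ((j₁ : ℕ) : ℤ) := (hpb j₁).2
  have hkm : (p j₁).toNat < m + 2 := by
    have := j₁.isLt; omega
  set k : Fin (m + 2) := ⟨(p j₁).toNat, hkm⟩ with hkdef
  have hkval : ((k : ℕ) : ℤ) = p j₁ := Int.toNat_of_nonneg hk0
  have hMk : k < j₁ ∧ (r v j₁ < r v k ∨ (r v k = r v j₁ ∧ k ≤ l)) :=
    (hp j₁ k).mp (le_of_eq hkval)
  have hkj2 : k < j₂ := lt_trans hMk.1 h12
  have hnMk : ¬ (((k : ℕ) : ℤ) ≤ p j₂) := by omega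
  have hnMk' : ¬ (r v j₂ < r v k ∨ (r v k = r v j₂ ∧ k ≤ l)) := by
    intro hc
    exact hnMk ((hp j₂ k).mpr ⟨hkj2, hc⟩)
  push_neg at hnMk'
  obtain ⟨hk2le, hk2eq⟩ := hnMk'
  -- i := p j₃ as a Fin
  have hi0 : 0 ≤ p j₃ := by have := (hpb j₂).1; omega
  have hiub : p j₃ < ((j₃ : ℕ) : ℤ) := (hpb j₃).2
  have him : (p j₃).toNat < m + 2 := by
    have := j₃.isLt; omega
  set i : Fin (m + 2) := ⟨(p j₃).toNat, him⟩ with hidef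
  have hival : ((i : ℕ) : ℤ) = p j₃ := Int.toNat_of_nonneg hi0
  have hMi : i < j₃ ∧ (r v j₃ < r v i ∨ (r v i = r v j₃ ∧ i ≤ l)) :=
    (hp j₃ i).mp (le_of_eq hival)
  -- r v j₁ < r v j₂
  have h12r : r v j₁ < r v j₂ := by
    rcases hMk.2 with hA | ⟨hBeq, hBle⟩
    · exact lt_of_lt_of_le hA hk2le
    · rcases lt_or_eq_of_le hk2le with h' | h'
      · linarith
      · exact absurd hBle (not_le_of_gt (hk2eq h'))
  have h23r : r v j₂ ≤ r v j₃ := hsp v j₁ j₂ j₃ h12 h23 h12r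
  -- l < j₂
  have hlj2 : l < j₂ := by
    by_contra hle
    push_neg at hle
    rcases lt_or_eq_of_le hle with h' | h'
    · rcases lt_or_eq_of_le (hl j₂) with h'' | h''
      · exact absurd (hsp' v j₁ j₂ l h12 h' h'') (not_le_of_gt h12r)
      · have := hl j₁; linarith
    · have := hl j₁; rw [← h'] at this; linarith
  rcases lt_or_ge i j₂ with hij2 | hij2
  · -- i < j₂
    have hnMi : ¬ (((i : ℕ) : ℤ) ≤ p j₂) := by omega
    have hnMi' : ¬ (r v j₂ < r v i ∨ (r v i = r v j₂ ∧ i ≤ l)) := by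
      intro hc
      exact hnMi ((hp j₂ i).mpr ⟨hij2, hc⟩)
    push_neg at hnMi'
    obtain ⟨hi2le, hi2eq⟩ := hnMi'
    rcases hMi.2 with hA | ⟨hBeq, hBle⟩
    · linarith
    · have heq : r v i = r v j₂ := le_antisymm hi2le (by linarith)
      exact absurd hBle (not_le_of_gt (hi2eq heq))
  · -- j₂ ≤ i
    have hli : l < i := lt_of_lt_of_le hlj2 hij2
    have hri : r v j₃ < r v i := by
      rcases hMi.2 with hA | ⟨hBeq, hBle⟩
      · exact hA
      · exact absurd hBle (not_le_of_gt hli)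
    rcases lt_or_eq_of_le (hl i) with h' | h'
    · exact absurd (hsp v l i j₃ hli hMi.1 h') (not_le_of_gt hri)
    · have := hl j₃; rw [h'] at this; linarith
end

section
/- Let (V, C, r) be a preference profile and D ⊆ C a candidate-deletion set, i.e., the restricted profile (V, C∖D, r) is single-peaked with respect to some linear order ≺ on C∖D. For any fixed subset W_D ⊆ D, define r'(v, c) = min(r(v, W_D), r(v, c)) for c ∈ C∖D (with r(v, ∅) interpreted as +∞ or omitted when W_D is empty). Then the profile (V, C∖D, r') is single-peaked with respect to the same order ≺. -/
/-- if deleting the candidates in `D` makes the profile single-peaked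
w.r.t. `≺`, then for any nonempty `W_D ⊆ D` the modified profile
`r' v c = min (r v W_D) (r v c)` on `C ∖ D` is also single-peaked w.r.t. `≺`. -/
theorem stmt7 {V C : Type*} [LinearOrder C]
    (r : V → C → ℝ) (hnn : ∀ v c, 0 ≤ r v c)
    (D : Finset C)
    (hsp : ∀ (v : V) (a b c : C), a ∉ D → b ∉ D → c ∉ D →
        a < b → b < c → r v a < r v b → r v b ≤ r v c)
    (hsp' : ∀ (v : V) (a b c : C), a ∉ D → b ∉ D → c ∉ D →
        a < b → b < c → r v c < r v b → r v b ≤ r v a)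
    (W_D : Finset C) (hWDsub : W_D ⊆ D) (hWDne : W_D.Nonempty)
    (r' : V → C → ℝ)
    (hr' : ∀ v c, r' v c = min (W_D.inf' hWDne (r v)) (r v c)) :
    (∀ (v : V) (a b c : C), a ∉ D → b ∉ D → c ∉ D →
        a < b → b < c → r' v a < r' v b → r' v b ≤ r' v c)
    ∧ (∀ (v : V) (a b c : C), a ∉ D → b ∉ D → c ∉ D →
        a < b → b < c → r' v c < r' v b → r' v b ≤ r' v a) := by
  constructor
  · intro v a b c ha hb hc hab hbc h
    rw [hr', hr'] at *
    rcases le_or_gt (r v b) (r v c) with h' | h'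
    · exact min_le_min le_rfl h'
    · have := hsp' v a b c ha hb hc hab hbc h'
      simp only [lt_min_iff, min_lt_iff] at h
      rcases h.1 with h1 | h1 <;> rcases h.2 with h2 | h2 <;> linarith
  · intro v a b c ha hb hc hab hbc h
    rw [hr', hr'] at *
    rcases le_or_gt (r v b) (r v a) with h' | h'
    · exact min_le_min le_rfl h'
    · have := hsp v a b c ha hb hc hab hbc h'
      simp only [lt_min_iff, min_lt_iff] at h
      rcases h.1 with h1 | h1 <;> rcases h.2 with h2 | h2 <;> linarith
end

section
/- Let w = (w_1, w_2, …) be a non-increasing sequence in [0,1] with w_1 = 1 that is non-constant, i.e., w_ℓ < 1 for some ℓ. Let ℓ be the minimal index with w_ℓ < 1 (so ℓ ≥ 2 and w_1 = ⋯ = w_{ℓ−1} = 1). In the reduction from Independent Set on a 3-regular graph G to w-Thiele (with vertex-candidates, ℓ−2 dummy candidates approved by every voter, one voter per edge approving its two endpoints plus all dummies, committee size k = K + ℓ − 2, utility bound U = (ℓ−2)|E(G)| + 3K): if V' ⊆ V(G) is an independent set of size K, then the committee W consisting of the K vertex-candidates of V' and all ℓ−2 dummy candidates has total Thiele utility exactly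 U. -/
/-- forward direction of the IS → w-Thiele reduction:
if `V'` is an independent set of size `K` in a 3-regular graph `G`, then the
committee consisting of the `K` vertex-candidates of `V'` together with all
`ℓ - 2 = d` dummy candidates has total Thiele utility exactly
`U = (ℓ-2)·|E(G)| + 3K`. -/
theorem stmt9 {Vert : Type*} [Fintype Vert] [DecidableEq Vert]
    (G : SimpleGraph Vert) [DecidableRel G.Adj]
    (hreg : ∀ x : Vert, G.degree x = 3)
    (d : ℕ) (w : ℕ → ℝ)
    (hmono : ∀ i j : ℕ, 1 ≤ i → i ≤ j → w j ≤ w i)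
    (hrange : ∀ i : ℕ, 0 ≤ w i ∧ w i ≤ 1)
    (hw1 : ∀ i : ℕ, 1 ≤ i → i ≤ d + 1 → w i = 1)
    (hwlt : w (d + 2) < 1)
    (V' : Finset Vert) (K : ℕ) (hK : V'.card = K)
    (hind : ∀ x ∈ V', ∀ y ∈ V', ¬ G.Adj x y)
    (A : Sym2 Vert → Finset (Vert ⊕ Fin d))
    (hA : ∀ x y : Vert,
        A s(x, y) = ({Sum.inl x, Sum.inl y} : Finset (Vert ⊕ Fin d))
          ∪ Finset.univ.image Sum.inr)
    (W : Finset (Vert ⊕ Fin d))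
    (hW : W = V'.image Sum.inl ∪ Finset.univ.image Sum.inr) :
    ∑ e ∈ G.edgeFinset, ∑ i ∈ Finset.Icc 1 ((A e ∩ W).card), w i
      = (d : ℝ) * G.edgeFinset.card + 3 * K := by
  classical
  -- per-edge intersection cardinality
  have hcard : ∀ e ∈ G.edgeFinset,
      (A e ∩ W).card = d + (V'.filter (fun v => v ∈ e)).card := by
    intro e he
    induction e using Sym2.ind with
    | _ x y =>
      have heq : A s(x, y) ∩ W
          = (({x, y} ∩ V').image Sum.inl) ∪ (Finset.univ.image Sum.inr) := by
        ext a
        cases a with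
        | inl v =>
          simp [hA, hW, Finset.mem_union, Finset.mem_image, Finset.mem_inter, and_comm] <;> tauto
        | inr j => simp [hA, hW]
      rw [heq, Finset.card_union_of_disjoint, Finset.card_image_of_injective _ Sum.inl_injective,
        Finset.card_image_of_injective _ Sum.inr_injective]
      · have h2 : ({x, y} ∩ V') = V'.filter (fun v => v ∈ s(x, y)) := by
          ext v
          simp [Sym2.mem_iff, and_comm]
        rw [Finset.card_univ, Fintype.card_fin, h2]
        ring
      · simp [Finset.disjoint_left]
  -- per-edge filter card ≤ 1
  have hle1 : ∀ e ∈ G.edgeFinset, (V'.filter (fun v => v ∈ e)).card ≤ 1 := by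
    intro e he
    induction e using Sym2.ind with
    | _ x y =>
      have hadj : G.Adj x y := by
        rwa [SimpleGraph.mem_edgeFinset, SimpleGraph.mem_edgeSet] at he
      by_contra h
      push_neg at h
      obtain ⟨a, ha, b, hb, hab⟩ := Finset.one_lt_card.mp h
      simp only [Finset.mem_filter, Sym2.mem_iff] at ha hb
      have hx : x ∈ V' ∧ y ∈ V' := by
        rcases ha.2 with rfl | rfl <;> rcases hb.2 with rfl | rfl <;>
          first | exact absurd rfl hab | exact ⟨ha.1, hb.1⟩ | exact ⟨hb.1, ha.1⟩
      exact hind x hx.1 y hx.2 hadj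
  -- rewrite each inner sum
  have hsum : ∀ e ∈ G.edgeFinset,
      ∑ i ∈ Finset.Icc 1 ((A e ∩ W).card), w i
        = (d : ℝ) + (V'.filter (fun v => v ∈ e)).card := by
    intro e he
    have h1 : (A e ∩ W).card ≤ d + 1 := by
      rw [hcard e he]; exact Nat.add_le_add_left (hle1 e he) d
    have : ∑ i ∈ Finset.Icc 1 ((A e ∩ W).card), w i
        = ∑ i ∈ Finset.Icc 1 ((A e ∩ W).card), (1 : ℝ) := by
      refine Finset.sum_congr rfl fun i hi => ?_
      rw [Finset.mem_Icc] at hi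
      exact hw1 i hi.1 (hi.2.trans h1)
    rw [this, Finset.sum_const, Nat.card_Icc, hcard e he]
    push_cast
    ring
  rw [Finset.sum_congr rfl hsum, Finset.sum_add_distrib, Finset.sum_const, nsmul_eq_mul,
    mul_comm]
  congr 1
  -- ∑ over edges of #(V' ∩ e) = 3K
  have key : ∑ e ∈ G.edgeFinset, (V'.filter (fun v => v ∈ e)).card = 3 * K := by
    have : ∀ e ∈ G.edgeFinset, (V'.filter (fun v => v ∈ e)).card
        = ∑ v ∈ V', if v ∈ e then 1 else 0 := by
      intro e _
      rw [Finset.card_filter]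
    rw [Finset.sum_congr rfl this, Finset.sum_comm]
    have : ∀ v ∈ V', (∑ e ∈ G.edgeFinset, if v ∈ e then 1 else 0) = 3 := by
      intro v _
      rw [← Finset.card_filter]
      have := G.incidenceFinset_eq_filter v
      rw [← this, SimpleGraph.card_incidenceFinset_eq_degree, hreg]
    rw [Finset.sum_congr rfl this, Finset.sum_const, smul_eq_mul, hK, mul_comm]
  calc ∑ e ∈ G.edgeFinset, ((V'.filter (fun v => v ∈ e)).card : ℝ)
      = ((∑ e ∈ G.edgeFinset, (V'.filter (fun v => v ∈ e)).card : ℕ) : ℝ) := by push_cast; ring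
    _ = 3 * K := by rw [key]; push_cast; ring
end

section
/- In the same reduction from Independent Set on a 3-regular graph G to w-Thiele, if W is a size-k committee with total utility at least U = (ℓ−2)|E(G)| + 3K (where k = K + ℓ − 2 and |E(G)| > 3), then W contains all ℓ−2 dummy candidates and the set of vertices corresponding to W minus the dummies is an independent set of size K in G. -/
open Finset

lemma pair_filter_card {α : Type*} [DecidableEq α] (a b : α) (hab : a ≠ b)
    (p : α → Prop) [DecidablePred p] :
    (({a, b} : Finset α).filter p).card
      = (if p a then 1 else 0) + (if p b then 1 else 0) := by
  rw [Finset.filter_insert, Finset.filter_singleton]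
  split_ifs <;> simp [hab]

lemma sum_w_le (w : ℕ → ℝ) (hrange : ∀ i : ℕ, 0 ≤ w i ∧ w i ≤ 1) (n : ℕ) :
    ∑ i ∈ Finset.Icc 1 n, w i ≤ n := by
  calc ∑ i ∈ Finset.Icc 1 n, w i ≤ ∑ i ∈ Finset.Icc 1 n, (1 : ℝ) :=
        Finset.sum_le_sum fun i _ => (hrange i).2
    _ = n := by simp [Nat.card_Icc]

lemma sum_w_eq (d : ℕ) (w : ℕ → ℝ) (hw1 : ∀ i : ℕ, 1 ≤ i → i ≤ d + 1 → w i = 1)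
    (n : ℕ) (hn : n ≤ d + 1) :
    ∑ i ∈ Finset.Icc 1 n, w i = n := by
  rw [Finset.sum_congr rfl (fun i hi => hw1 i (Finset.mem_Icc.mp hi).1
    (le_trans (Finset.mem_Icc.mp hi).2 hn))]
  simp [Nat.card_Icc]

lemma sum_w_lt (d : ℕ) (w : ℕ → ℝ) (hw1 : ∀ i : ℕ, 1 ≤ i → i ≤ d + 1 → w i = 1)
    (hwlt : w (d + 2) < 1) :
    ∑ i ∈ Finset.Icc 1 (d + 2), w i < (d : ℝ) + 2 := by
  rw [show d + 2 = (d + 1) + 1 from rfl,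
    Finset.sum_Icc_succ_top (by omega : 1 ≤ d + 1 + 1),
    sum_w_eq d w hw1 (d + 1) le_rfl]
  push_cast
  linarith


/-- backward direction of the IS → w-Thiele reduction:
if a committee `W` of size `k = K + d` has total Thiele utility at least
`U = d·|E(G)| + 3K` (and `|E(G)| > 3`), then `W` contains all `d` dummy
candidates and the vertices corresponding to `W` minus the dummies form an
independent set of size `K` in `G`. -/
theorem stmt10 {Vert : Type*} [Fintype Vert] [DecidableEq Vert]
    (G : SimpleGraph Vert) [DecidableRel G.Adj]
    (hreg : ∀ x : Vert, G.degree x = 3)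
    (hE : 3 < G.edgeFinset.card)
    (d : ℕ) (w : ℕ → ℝ)
    (hmono : ∀ i j : ℕ, 1 ≤ i → i ≤ j → w j ≤ w i)
    (hrange : ∀ i : ℕ, 0 ≤ w i ∧ w i ≤ 1)
    (hw1 : ∀ i : ℕ, 1 ≤ i → i ≤ d + 1 → w i = 1)
    (hwlt : w (d + 2) < 1)
    (K : ℕ)
    (A : Sym2 Vert → Finset (Vert ⊕ Fin d))
    (hA : ∀ x y : Vert,
        A s(x, y) = ({Sum.inl x, Sum.inl y} : Finset (Vert ⊕ Fin d))
          ∪ Finset.univ.image Sum.inr)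
    (W : Finset (Vert ⊕ Fin d)) (hWcard : W.card = K + d)
    (hutil : (d : ℝ) * G.edgeFinset.card + 3 * K
        ≤ ∑ e ∈ G.edgeFinset, ∑ i ∈ Finset.Icc 1 ((A e ∩ W).card), w i) :
    (∀ t : Fin d, Sum.inr t ∈ W)
    ∧ (Finset.univ.filter (fun x : Vert => Sum.inl x ∈ W)).card = K
    ∧ (∀ x y : Vert, Sum.inl x ∈ W → Sum.inl y ∈ W → ¬ G.Adj x y) := by
  classical
  set m := G.edgeFinset.card with hm
  set Dum : Finset (Vert ⊕ Fin d) := Finset.univ.image Sum.inr with hDum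
  set Dset : Finset (Vert ⊕ Fin d) := Dum ∩ W with hDset
  set D := Dset.card with hD
  set S : Finset Vert := Finset.univ.filter (fun x : Vert => Sum.inl x ∈ W) with hS
  set s := S.card with hs
  have hDumcard : Dum.card = d := by
    rw [hDum, Finset.card_image_of_injective _ Sum.inr_injective]
    simp
  have hDle : D ≤ d := by
    rw [← hDumcard]
    exact Finset.card_le_card Finset.inter_subset_left
  -- W splits into vertex part and dummy part
  have hsD : s + D = K + d := by
    have h1 : (W.filter (fun c => c.isLeft)) = S.image Sum.inl := by
      ext c
      cases c with
      | inl v => simp [hS]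
      | inr t => simp
    have h2 : (W.filter (fun c => ¬ (Sum.isLeft c = true))) = Dset := by
      ext c
      cases c with
      | inl v => simp [hDset, hDum]
      | inr u => simp [hDset, hDum]
    have h3 := Finset.card_filter_add_card_filter_not
      (s := W) (p := fun c => c.isLeft = true)
    rw [h1, h2] at h3
    have h4 : (S.image Sum.inl).card = s :=
      Finset.card_image_of_injective S (Sum.inl_injective (β := Fin d))
    rw [h4, hWcard] at h3
    exact h3
  -- the per-edge vertex count
  set t : Sym2 Vert → ℕ :=
    fun e => (Finset.univ.filter fun v => v ∈ e ∧ Sum.inl v ∈ W).card with ht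
  -- per-edge intersection cardinality
  have hcard : ∀ x y : Vert, x ≠ y → (A s(x, y) ∩ W).card = t s(x, y) + D := by
    intro x y hxy
    rw [hA x y, Finset.union_inter_distrib_right]
    have hdisj : Disjoint (({Sum.inl x, Sum.inl y} : Finset (Vert ⊕ Fin d)) ∩ W)
        (Dum ∩ W) := by
      apply Finset.disjoint_left.mpr
      intro c hc hc'
      have h1 := Finset.mem_inter.mp hc |>.1
      have h2 := Finset.mem_inter.mp hc' |>.1
      simp [hDum] at h1 h2
      obtain ⟨u, hu⟩ := h2
      rcases h1 with h | h <;> rw [h] at hu <;> simp at hu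
    rw [Finset.card_union_of_disjoint hdisj]
    have hDeq : (Dum ∩ W).card = D := rfl
    have hpair : (({Sum.inl x, Sum.inl y} : Finset (Vert ⊕ Fin d)) ∩ W).card
        = t s(x, y) := by
      have hfil : (Finset.univ.filter fun v => v ∈ s(x,y) ∧ Sum.inl v ∈ W)
          = ({x, y} : Finset Vert).filter (fun v => Sum.inl v ∈ W) := by
        ext v
        simp only [Finset.mem_filter, Finset.mem_univ, true_and, Sym2.mem_iff,
          Finset.mem_insert, Finset.mem_singleton]
      simp only [ht]
      rw [hfil, pair_filter_card x y hxy,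
        ← Finset.filter_mem_eq_inter,
        pair_filter_card (Sum.inl x) (Sum.inl y) (by simp [hxy]) (· ∈ W)]
    omega
  -- handshake: total endpoint count equals 3 * s
  have hhand : ∑ e ∈ G.edgeFinset, t e = 3 * s := by
    have : ∑ e ∈ G.edgeFinset, t e
        = ∑ e ∈ G.edgeFinset, ∑ v : Vert,
            (if v ∈ e ∧ Sum.inl v ∈ W then 1 else 0) := by
      refine Finset.sum_congr rfl fun e _ => ?_
      simp only [ht]
      rw [Finset.card_filter]
    rw [this, Finset.sum_comm]
    have hinner : ∀ v : Vert,
        (∑ e ∈ G.edgeFinset, if v ∈ e ∧ Sum.inl v ∈ W then 1 else 0)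
          = if Sum.inl v ∈ W then 3 else 0 := by
      intro v
      by_cases hv : Sum.inl v ∈ W
      · simp only [hv, and_true, if_pos]
        rw [← Finset.card_filter]
        have : G.edgeFinset.filter (fun e => v ∈ e) = G.incidenceFinset v := by
          ext e
          simp [SimpleGraph.mem_incidenceFinset, SimpleGraph.incidenceSet,
            SimpleGraph.mem_edgeFinset]
        rw [this, G.card_incidenceFinset_eq_degree v, hreg v]
      · simp [hv]
    rw [Finset.sum_congr rfl fun v _ => hinner v]
    rw [← Finset.sum_filter, Finset.sum_const, smul_eq_mul, ← hS, ← hs, mul_comm]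
  -- per-edge upper bound
  have hper : ∀ e ∈ G.edgeFinset,
      ∑ i ∈ Finset.Icc 1 ((A e ∩ W).card), w i ≤ ((t e : ℝ) + D) := by
    intro e he
    induction e using Sym2.ind with
    | _ x y =>
      have hadj : G.Adj x y := by
        rw [SimpleGraph.mem_edgeFinset, SimpleGraph.mem_edgeSet] at he
        exact he
      rw [hcard x y hadj.ne]
      calc ∑ i ∈ Finset.Icc 1 (t s(x,y) + D), w i ≤ ((t s(x,y) + D : ℕ) : ℝ) :=
            sum_w_le w hrange _
        _ = (t s(x,y) : ℝ) + D := by push_cast; ring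
  -- total upper bound
  have htot : ∑ e ∈ G.edgeFinset, ∑ i ∈ Finset.Icc 1 ((A e ∩ W).card), w i
      ≤ 3 * (s : ℝ) + (D : ℝ) * m := by
    calc ∑ e ∈ G.edgeFinset, ∑ i ∈ Finset.Icc 1 ((A e ∩ W).card), w i
        ≤ ∑ e ∈ G.edgeFinset, ((t e : ℝ) + D) := Finset.sum_le_sum hper
      _ = (↑(∑ e ∈ G.edgeFinset, t e) : ℝ) + D * m := by
          rw [Finset.sum_add_distrib, Finset.sum_const, ← Nat.cast_sum,
            nsmul_eq_mul, mul_comm]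
      _ = 3 * (s : ℝ) + (D : ℝ) * m := by rw [hhand]; push_cast; ring
  have hmR : (3 : ℝ) < m := by exact_mod_cast hE
  have hsDR : (s : ℝ) + D = K + d := by exact_mod_cast hsD
  have hDd : D = d := by
    have h1 : (d : ℝ) * m + 3 * K ≤ 3 * s + D * m := le_trans hutil htot
    have h3 : (D : ℝ) ≤ d := by exact_mod_cast hDle
    have h2 : (d : ℝ) ≤ D := by nlinarith
    exact_mod_cast le_antisymm h3 h2
  have hsK : s = K := by omega
  -- all dummies in W
  have hdum : ∀ u : Fin d, Sum.inr u ∈ W := by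
    have heq : Dset = Dum := Finset.eq_of_subset_of_card_le Finset.inter_subset_left
      (by rw [hDumcard, ← hD, hDd])
    intro u
    have : (Sum.inr u : Vert ⊕ Fin d) ∈ Dum := by simp [hDum]
    rw [← heq] at this
    exact (Finset.mem_inter.mp this).2
  refine ⟨hdum, hsK, ?_⟩
  -- independence
  intro x y hx hy hadj
  have he0 : s(x, y) ∈ G.edgeFinset := by
    rw [SimpleGraph.mem_edgeFinset, SimpleGraph.mem_edgeSet]; exact hadj
  have hstrict : ∑ e ∈ G.edgeFinset, ∑ i ∈ Finset.Icc 1 ((A e ∩ W).card), w i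
      < ∑ e ∈ G.edgeFinset, ((t e : ℝ) + D) := by
    apply Finset.sum_lt_sum hper
    refine ⟨s(x, y), he0, ?_⟩
    have ht2 : t s(x, y) = 2 := by
      simp only [ht]
      have : (Finset.univ.filter fun v => v ∈ s(x,y) ∧ Sum.inl v ∈ W)
          = ({x, y} : Finset Vert).filter (fun v => Sum.inl v ∈ W) := by
        ext v
        simp [Sym2.mem_iff]
      rw [this, pair_filter_card x y hadj.ne]
      simp [hx, hy]
    rw [hcard x y hadj.ne, ht2, hDd]
    calc ∑ i ∈ Finset.Icc 1 (2 + d), w i = ∑ i ∈ Finset.Icc 1 (d + 2), w i := by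
          rw [Nat.add_comm]
      _ < (d : ℝ) + 2 := sum_w_lt d w hw1 hwlt
      _ = (2 : ℝ) + d := by ring
  have hHH : ∑ e ∈ G.edgeFinset, ((t e : ℝ) + D)
      = 3 * (s : ℝ) + (D : ℝ) * m := by
    rw [Finset.sum_add_distrib, Finset.sum_const, ← Nat.cast_sum, hhand,
      nsmul_eq_mul, mul_comm (m:ℝ)]
    push_cast
    ring
  rw [hHH, hDd, hsK] at hstrict
  have := le_trans hutil (le_of_lt hstrict)
  nlinarith [hmR]
end

section
/- Let (V, C, r) be a preference profile with a candidate-deletion set D and fix W_D ⊆ D with |W_D| ≤ k. If W* is an optimal size-k committee for the Chamberlin–Courant minimization problem with W* ∩ D = W_D, and W'' is an optimal size-(k − |W_D|) committee for the modified single-peaked instance (V, C∖D, r') with r'(v,c) = min(r(v,W_D), r(v,c)), then W_D ∪ W'' is also an optimal size-k committee for the original instance. -/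
lemma inf'_min_const {C : Type*} (T : Finset C) (hT : T.Nonempty) (a : ℝ) (f : C → ℝ) :
    T.inf' hT (fun x => min a (f x)) = min a (T.inf' hT f) := by
  apply le_antisymm
  · apply le_min
    · obtain ⟨x, hx⟩ := hT
      exact (Finset.inf'_le _ hx).trans (min_le_left _ _)
    · exact Finset.le_inf' _ _ fun b hb => (Finset.inf'_le _ hb).trans (min_le_right _ _)
  · exact Finset.le_inf' _ _ fun b hb =>
      min_le_min le_rfl (Finset.inf'_le _ hb)
/-- if `W*` is an optimal size-`k` CC committee with `W* ∩ D = W_D`, and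
`W''` is an optimal size-`(k - |W_D|)` committee (among committees avoiding `D`) for the
modified single-peaked instance with `r' v c = min (r v W_D) (r v c)`, then `W_D ∪ W''`
is also an optimal size-`k` committee for the original instance. -/
theorem stmt16 {V C : Type*} [Fintype V] [LinearOrder C]
    (r : V → C → ℝ) (hnn : ∀ v c, 0 ≤ r v c)
    (D : Finset C)
    (hsp : ∀ (v : V) (a b c : C), a ∉ D → b ∉ D → c ∉ D →
        a < b → b < c → r v a < r v b → r v b ≤ r v c)
    (hsp' : ∀ (v : V) (a b c : C), a ∉ D → b ∉ D → c ∉ D →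
        a < b → b < c → r v c < r v b → r v b ≤ r v a)
    (k : ℕ) (W_D : Finset C) (hWDsub : W_D ⊆ D) (hWDne : W_D.Nonempty)
    (hWDk : W_D.card < k)
    (r' : V → C → ℝ)
    (hr' : ∀ v c, r' v c = min (W_D.inf' hWDne (r v)) (r v c))
    (Wstar : Finset C) (hWsne : Wstar.Nonempty) (hWscard : Wstar.card = k)
    (hWsopt : ∀ (S : Finset C) (hS : S.Nonempty), S.card = k →
        ∑ v : V, Wstar.inf' hWsne (r v) ≤ ∑ v : V, S.inf' hS (r v))
    (hWsD : Wstar ∩ D = W_D)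
    (W'' : Finset C) (hW''D : ∀ c ∈ W'', c ∉ D) (hW''ne : W''.Nonempty)
    (hW''card : W''.card = k - W_D.card)
    (hW''opt : ∀ (S : Finset C), (∀ c ∈ S, c ∉ D) → ∀ hS : S.Nonempty,
        S.card = k - W_D.card →
        ∑ v : V, W''.inf' hW''ne (r' v) ≤ ∑ v : V, S.inf' hS (r' v)) :
    (W_D ∪ W'').card = k ∧
    ∀ (S : Finset C) (hS : S.Nonempty), S.card = k →
      ∑ v : V, (W_D ∪ W'').inf' (hWDne.mono Finset.subset_union_left) (r v)
        ≤ ∑ v : V, S.inf' hS (r v) := by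
  classical
  have hdisj : Disjoint W_D W'' := by
    rw [Finset.disjoint_left]
    intro c hc hc'
    exact hW''D c hc' (hWDsub hc)
  have hcard : (W_D ∪ W'').card = k := by
    rw [Finset.card_union_of_disjoint hdisj, hW''card]
    omega
  -- key: for nonempty T avoiding D, inf' (W_D ∪ T) r = inf' T r'
  have key : ∀ (T : Finset C) (hT : T.Nonempty) (v : V),
      (W_D ∪ T).inf' (hWDne.mono Finset.subset_union_left) (r v) = T.inf' hT (r' v) := by
    intro T hT v
    rw [Finset.inf'_union hWDne hT]
    have : T.inf' hT (r' v) = T.inf' hT (fun c => min (W_D.inf' hWDne (r v)) (r v c)) :=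
      Finset.inf'_congr hT rfl (fun c _ => hr' v c)
    rw [this, inf'_min_const]
  refine ⟨hcard, fun S hS hScard => ?_⟩
  -- Wstar \ D
  have hWDsubWs : W_D ⊆ Wstar := hWsD ▸ Finset.inter_subset_left
  have hsdcard : (Wstar \ D).card = k - W_D.card := by
    have := Finset.card_sdiff_add_card_inter Wstar D
    rw [hWsD, hWscard] at this
    omega
  have hsdne : (Wstar \ D).Nonempty := by
    rw [← Finset.card_pos, hsdcard]; omega
  have hsdD : ∀ c ∈ Wstar \ D, c ∉ D := fun c hc => (Finset.mem_sdiff.mp hc).2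
  have hWsunion : W_D ∪ (Wstar \ D) = Wstar := by
    rw [← hWsD]
    ext c
    simp only [Finset.mem_union, Finset.mem_inter, Finset.mem_sdiff]
    tauto
  calc ∑ v : V, (W_D ∪ W'').inf' (hWDne.mono Finset.subset_union_left) (r v)
      = ∑ v : V, W''.inf' hW''ne (r' v) := by
        exact Finset.sum_congr rfl fun v _ => key W'' hW''ne v
    _ ≤ ∑ v : V, (Wstar \ D).inf' hsdne (r' v) := hW''opt _ hsdD hsdne hsdcard
    _ = ∑ v : V, (W_D ∪ (Wstar \ D)).inf' (hWDne.mono Finset.subset_union_left) (r v) := by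
        exact Finset.sum_congr rfl fun v _ => (key _ hsdne v).symm
    _ = ∑ v : V, Wstar.inf' hWsne (r v) := by
        exact Finset.sum_congr rfl fun v _ =>
          Finset.inf'_congr _ hWsunion fun c _ => rfl
    _ ≤ ∑ v : V, S.inf' hS (r v) := hWsopt S hS hScard
end
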